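/- Let M be a finitely generated R_d-module such that M/I_nM is a finite set for every n ≥ 0 (i.e., M is systematically coinvariant-finite). Then M is a torsion R_d-module; equivalently (since M is finitely generated and R_d is a Noetherian integral domain), there exists a nonzero element r of R_d with r·M = 0. -/

import Mathlib

noncomputable section

open MvPowerSeries

/-- `Rd p d` is the power series ring `ℤ_p[[T_1, ..., T_d]]`. -/
abbrev Rd (p : ℕ) [Fact p.Prime] (d : ℕ) : Type := MvPowerSeries (Fin d) ℤ_[p]

/-- `omegaP p d n i` is the element `ω_n(T_i) = (1 + T_i)^(p^n) - 1` of `R_d`. -/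
def omegaP (p : ℕ) [Fact p.Prime] (d : ℕ) (n : ℕ) (i : Fin d) : Rd p d :=
  (MvPowerSeries.X i + 1) ^ p ^ n - 1

/-- `In p d n` is the ideal of `R_d` generated by `ω_n(T_1), ..., ω_n(T_d)`. -/
def In (p : ℕ) [Fact p.Prime] (d : ℕ) (n : ℕ) : Ideal (Rd p d) :=
  Ideal.span (Set.range (omegaP p d n))

/-- `nuF p d n m i = ν_{n,m}(T_i) = Σ_{j < p^(m-n)} (1+T_i)^(j p^n)`. -/
def nuF (p : ℕ) [Fact p.Prime] (d : ℕ) (n m : ℕ) (i : Fin d) : Rd p d :=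
  ∑ j ∈ Finset.range (p ^ (m - n)), (MvPowerSeries.X i + 1) ^ (j * p ^ n)

/-- `nu p d n m = ∏_i ν_{n,m}(T_i)`. -/
def nu (p : ℕ) [Fact p.Prime] (d : ℕ) (n m : ℕ) : Rd p d :=
  ∏ i : Fin d, nuF p d n m i

lemma nuF_mul_omegaP (p : ℕ) [Fact p.Prime] (d : ℕ) {n m : ℕ} (h : n ≤ m) (i : Fin d) :
    nuF p d n m i * omegaP p d n i = omegaP p d m i := by
  have h1 : ∀ j : ℕ, (MvPowerSeries.X i + 1 : Rd p d) ^ (j * p ^ n)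
      = ((MvPowerSeries.X i + 1) ^ p ^ n) ^ j := fun j => by
    rw [← pow_mul, mul_comm]
  simp only [nuF, omegaP, h1]
  rw [geom_sum_mul, ← pow_mul, ← pow_add, Nat.add_sub_cancel' h]

lemma In_le_In (p : ℕ) [Fact p.Prime] (d : ℕ) {n m : ℕ} (h : n ≤ m) :
    In p d m ≤ In p d n := by
  rw [In, Ideal.span_le]
  rintro _ ⟨i, rfl⟩
  rw [← nuF_mul_omegaP p d h i]
  exact Ideal.mul_mem_left _ _ (Ideal.subset_span ⟨i, rfl⟩)

lemma nu_mul_mem (p : ℕ) [Fact p.Prime] (d : ℕ) {n m : ℕ} (h : n ≤ m) {r : Rd p d}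
    (hr : r ∈ In p d n) : nu p d n m * r ∈ In p d m := by
  have : In p d n ≤ Submodule.comap (LinearMap.lsmul (Rd p d) (Rd p d) (nu p d n m))
      (In p d m) := by
    rw [In, Ideal.span_le]
    rintro _ ⟨i, rfl⟩
    simp only [SetLike.mem_coe, Submodule.mem_comap, LinearMap.lsmul_apply, smul_eq_mul]
    rw [nu, ← Finset.mul_prod_erase _ _ (Finset.mem_univ i), mul_right_comm,
      nuF_mul_omegaP p d h i]
    exact Ideal.mul_mem_right _ _ (Ideal.subset_span ⟨i, rfl⟩)
  simpa using this hr

/-- The quotient `M/I_nM`. -/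
abbrev QuotM (p : ℕ) [Fact p.Prime] (d : ℕ) (M : Type) [AddCommGroup M] [Module (Rd p d) M]
    (n : ℕ) : Type :=
  M ⧸ (In p d n • (⊤ : Submodule (Rd p d) M))

/-- The transition map `M/I_nM → M/I_mM` of the directed system, induced by
multiplication by `∏_i ν_{n,m}(T_i)`. -/
def transMap (p : ℕ) [Fact p.Prime] (d : ℕ) (M : Type) [AddCommGroup M] [Module (Rd p d) M]
    (n m : ℕ) (h : n ≤ m) : QuotM p d M n →ₗ[Rd p d] QuotM p d M m :=
  Submodule.mapQ _ _ (LinearMap.lsmul (Rd p d) M (nu p d n m)) (by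
    refine Submodule.smul_le.2 fun r hr x _ => ?_
    simp only [Submodule.mem_comap, LinearMap.lsmul_apply, smul_smul]
    exact Submodule.smul_mem_smul (nu_mul_mem p d h hr) trivial)

/-- The direct limit `lim→_n M/I_nM`. -/
abbrev QuotLimit (p : ℕ) [Fact p.Prime] (d : ℕ) (M : Type) [AddCommGroup M]
    [Module (Rd p d) M] : Type :=
  Module.DirectLimit (fun n => QuotM p d M n) (transMap p d M)

/-- A finitely generated, systematically coinvariant-finite `R_d`-module is
torsion: some nonzero `r : R_d` annihilates `M`. -/
theorem systematically_coinvariant_finite_is_torsion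
    (p d : ℕ) [Fact p.Prime] (hd : 1 ≤ d)
    (M : Type) [AddCommGroup M] [Module (Rd p d) M] [Module.Finite (Rd p d) M]
    (hfin : ∀ n : ℕ, Finite (QuotM p d M n)) :
    ∃ r : Rd p d, r ≠ 0 ∧ ∀ x : M, r • x = 0 := by
  classical
  have hQ := hfin 0
  set c : ℕ := Nat.card (QuotM p d M 0) with hc_def
  have hc : 0 < c := Nat.card_pos
  -- the endomorphism `(c : R) • id` has range inside `I₀ • ⊤`
  have hrange : LinearMap.range ((c : Rd p d) • (LinearMap.id : M →ₗ[Rd p d] M))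
      ≤ In p d 0 • (⊤ : Submodule (Rd p d) M) := by
    rintro _ ⟨x, rfl⟩
    simp only [LinearMap.smul_apply, LinearMap.id_apply]
    have h1 : (c : Rd p d) • x = c • x := Nat.cast_smul_eq_nsmul _ _ _
    have h2 : ((c : Rd p d) • (Submodule.Quotient.mk x) : QuotM p d M 0) = 0 := by
      rw [Nat.cast_smul_eq_nsmul]
      exact card_nsmul_eq_zero'
    rwa [← Submodule.Quotient.mk_smul, Submodule.Quotient.mk_eq_zero] at h2
  obtain ⟨q, hmonic, -, hcoeff, haeval⟩ :=
    LinearMap.exists_monic_and_coeff_mem_pow_and_aeval_eq_zero_of_range_le_smul (Rd p d)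
      ((c : Rd p d) • (LinearMap.id : M →ₗ[Rd p d] M)) (In p d 0) hrange
  refine ⟨Polynomial.eval (c : Rd p d) q, ?_, ?_⟩
  · -- nonzero: its constant coefficient is `c ^ q.natDegree ≠ 0`
    intro h0
    have hφ : ∀ a ∈ In p d 0, MvPowerSeries.constantCoeff (σ := Fin d) (R := ℤ_[p]) a = 0 := by
      intro a ha
      have : In p d 0 ≤ RingHom.ker (MvPowerSeries.constantCoeff (σ := Fin d) (R := ℤ_[p])) := by
        rw [In, Ideal.span_le]
        rintro _ ⟨i, rfl⟩
        simp [RingHom.mem_ker, omegaP]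
      exact this ha
    have hval : MvPowerSeries.constantCoeff (σ := Fin d) (R := ℤ_[p]) (Polynomial.eval (c : Rd p d) q)
        = (c : ℤ_[p]) ^ q.natDegree := by
      rw [Polynomial.eval_eq_sum_range, map_sum]
      rw [Finset.sum_range_succ]
      have hz : ∀ i ∈ Finset.range q.natDegree,
          MvPowerSeries.constantCoeff (σ := Fin d) (R := ℤ_[p]) (q.coeff i * (c : Rd p d) ^ i) = 0 := by
        intro i hi
        rw [Finset.mem_range] at hi
        have : q.coeff i ∈ In p d 0 := by
          have := hcoeff i
          exact Ideal.pow_le_self (Nat.sub_ne_zero_of_lt hi) this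
        rw [map_mul, hφ _ this, zero_mul]
      rw [Finset.sum_eq_zero hz, zero_add, hmonic.coeff_natDegree, one_mul, map_pow,
        map_natCast]
    rw [h0, map_zero] at hval
    have : (c : ℤ_[p]) ^ q.natDegree ≠ 0 :=
      pow_ne_zero _ (Nat.cast_ne_zero.mpr hc.ne')
    exact this hval.symm
  · -- it annihilates M
    intro x
    have hf : ((c : Rd p d) • (LinearMap.id : M →ₗ[Rd p d] M))
        = algebraMap (Rd p d) (Module.End (Rd p d) M) (c : Rd p d) := by
      ext m
      simp [Module.algebraMap_end_apply, Nat.cast_smul_eq_nsmul]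
    rw [hf, Polynomial.aeval_algebraMap_apply_eq_algebraMap_eval] at haeval
    have := congrArg (fun (g : Module.End (Rd p d) M) => g x) haeval
    simpa [Module.algebraMap_end_apply] using this
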